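/- arXiv:2011.10176 — 2 statements merged into one kernel-verified Lean document; each statement's English description precedes it below -/
import Mathlib

section
/- Let n ≥ 1, 0 < q ≤ λ < ∞ and let φ : ℝⁿ → ℂ be a Schwartz function. There is a constant C > 0 depending only on n and λ such that: for every locally integrable f : ℝⁿ → ℂ for which ∫ |φ_t(x−y)| |f(y)| dy < ∞ for all x ∈ ℝⁿ and t > 0, and for every t > 0 and x ∈ ℝⁿ, one has |(φ_t ∗ f)(x)| ≤ C · t^{−n/λ} · ‖M*_φ f‖_{M_q^λ}. -/
open MeasureTheory
open scoped ENNReal NNReal BigOperators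

noncomputable section

abbrev Euc (n : ℕ) := EuclideanSpace ℝ (Fin n)

/-- Closed axis-parallel cube with lower corner `c` and sidelength `ℓ`. -/
def cube {n : ℕ} (c : Euc n) (ℓ : ℝ) : Set (Euc n) :=
  {y : Euc n | ∀ i, c i ≤ y i ∧ y i ≤ c i + ℓ}

/-- The cube with the same center as `cube c ℓ` and twice its sidelength. -/
def cube2 {n : ℕ} (c : Euc n) (ℓ : ℝ) : Set (Euc n) :=
  cube (WithLp.toLp 2 (fun i => c i - ℓ / 2) : Euc n) (2 * ℓ)

/-- Morrey "norm" (in `ℝ≥0∞`) of a nonnegative-valued function `u`. -/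
def morrey (n : ℕ) (q lam : ℝ) (u : Euc n → ℝ≥0∞) : ℝ≥0∞ :=
  ⨆ (c : Euc n) (ℓ : ℝ) (_ : 0 < ℓ),
    volume (cube c ℓ) ^ (1 / lam - 1 / q) *
      (∫⁻ y in cube c ℓ, (u y) ^ q) ^ (1 / q)

/-- Dilation `φ_t(x) = t^{-n} φ(x/t)`. -/
def dilat (n : ℕ) (φ : Euc n → ℂ) (t : ℝ) (x : Euc n) : ℂ :=
  (((t ^ n)⁻¹ : ℝ) : ℂ) * φ (t⁻¹ • x)

/-- Convolution `(φ_t ∗ f)(x)`. -/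
def conv (n : ℕ) (φ f : Euc n → ℂ) (t : ℝ) (x : Euc n) : ℂ :=
  ∫ y, dilat n φ t (x - y) * f y

/-- Nontangential maximal function `M*_φ f`. -/
def ntMax (n : ℕ) (φ f : Euc n → ℂ) (x : Euc n) : ℝ≥0∞ :=
  ⨆ (t : ℝ) (_ : 0 < t) (y : Euc n) (_ : dist x y < t), (‖conv n φ f t y‖₊ : ℝ≥0∞)

/-- Smooth (radial) maximal function `M_φ f`. -/
def smMax (n : ℕ) (φ f : Euc n → ℂ) (x : Euc n) : ℝ≥0∞ :=
  ⨆ (t : ℝ) (_ : 0 < t), (‖conv n φ f t x‖₊ : ℝ≥0∞)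

/-- Truncated maximal function `m_φ f`. -/
def trMax (n : ℕ) (φ f : Euc n → ℂ) (x : Euc n) : ℝ≥0∞ :=
  ⨆ (t : ℝ) (_ : 0 < t ∧ t ≤ 1), (‖conv n φ f t x‖₊ : ℝ≥0∞)

/-- Fourier transform `f̂(ξ) = ∫ e^{-i x·ξ} f(x) dx`. -/
def ft (n : ℕ) (f : Euc n → ℂ) (ξ : Euc n) : ℂ :=
  ∫ x, Complex.exp (-(Complex.I * ((inner ℝ x ξ : ℝ) : ℂ))) * f x

/-- A dyadic cube `2^k (m + [0,1)^n)`, recorded by its data. -/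
structure DyadicCube (n : ℕ) where
  k : ℤ
  m : Fin n → ℤ

/-- The underlying set of a dyadic cube. -/
def DyadicCube.set {n : ℕ} (D : DyadicCube n) : Set (Euc n) :=
  {y : Euc n | ∀ i, (2 : ℝ) ^ D.k * (D.m i : ℝ) ≤ y i ∧ y i < (2 : ℝ) ^ D.k * ((D.m i : ℝ) + 1)}

/-- Sidelength of a dyadic cube. -/
def DyadicCube.len {n : ℕ} (D : DyadicCube n) : ℝ := (2 : ℝ) ^ D.k

/-- The cube with the same center as the dyadic cube `D` and twice its sidelength. -/
def DyadicCube.double {n : ℕ} (D : DyadicCube n) : Set (Euc n) :=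
  cube (WithLp.toLp 2 (fun i => (2 : ℝ) ^ D.k * (D.m i : ℝ) - (2 : ℝ) ^ D.k / 2) : Euc n) (2 * (2 : ℝ) ^ D.k)

/-- The norm `‖{s_Q}‖_{λ,q}` of a family of scalars indexed by dyadic cubes. -/
def sNorm (n : ℕ) (q lam : ℝ) (s : DyadicCube n → ℂ) : ℝ≥0∞ :=
  ⨆ J : DyadicCube n,
    (volume J.set ^ (q / lam - 1) *
      ∑' Q : {Q : DyadicCube n // Q.set ⊆ J.set},
        (volume (Q.1).set ^ (1 / q - 1 / lam) * (‖s Q.1‖₊ : ℝ≥0∞)) ^ q) ^ (1 / q)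

/-- `(q,λ,∞)`-atom supported in the set `Q` (with given volume normalization). -/
def IsAtomOn (n : ℕ) (q lam : ℝ) (Q : Set (Euc n)) (a : Euc n → ℂ) : Prop :=
  Measurable a ∧ Function.support a ⊆ Q ∧
    (∀ x, (‖a x‖₊ : ℝ≥0∞) ≤ volume Q ^ (-(1 / lam))) ∧
    ∀ α : Fin n → ℕ, ((∑ i, α i : ℕ) : ℤ) ≤ ⌊(n : ℝ) * (1 / q - 1)⌋ →
      ∫ x, (∏ i, ((x i : ℝ) : ℂ) ^ α i) * a x = 0



lemma cube_measurable {n : ℕ} (c : Euc n) (ℓ : ℝ) : MeasurableSet (cube c ℓ) := by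
  have h : cube c ℓ = (MeasurableEquiv.toLp 2 (Fin n → ℝ)).symm ⁻¹'
      (Set.univ.pi fun i => Set.Icc (c i) (c i + ℓ)) := by
    ext y
    simp only [cube, Set.mem_setOf_eq, Set.mem_preimage, Set.mem_pi, Set.mem_univ, true_implies,
      Set.mem_Icc, MeasurableEquiv.coe_toLp_symm, MeasurableEquiv.coe_mk, MeasurableEquiv.toLp_symm_apply]
  rw [h]
  exact (MeasurableSet.univ_pi fun i => measurableSet_Icc).preimage (by fun_prop)

lemma cube_volume {n : ℕ} (c : Euc n) (ℓ : ℝ) :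
    volume (cube c ℓ) = ENNReal.ofReal ℓ ^ n := by
  have h : cube c ℓ = (MeasurableEquiv.toLp 2 (Fin n → ℝ)).symm ⁻¹'
      (Set.univ.pi fun i => Set.Icc (c i) (c i + ℓ)) := by
    ext y
    simp only [cube, Set.mem_setOf_eq, Set.mem_preimage, Set.mem_pi, Set.mem_univ, true_implies,
      Set.mem_Icc, MeasurableEquiv.coe_toLp_symm, MeasurableEquiv.coe_mk, MeasurableEquiv.toLp_symm_apply]
  rw [h, (EuclideanSpace.volume_preserving_symm_measurableEquiv_toLp (Fin n)).measure_preimage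
    ((MeasurableSet.univ_pi fun i => measurableSet_Icc).nullMeasurableSet)]
  rw [volume_pi_pi]
  simp [Real.volume_Icc]

lemma cube_dist {n : ℕ} (hn : 1 ≤ n) (x : Euc n) (ℓ : ℝ) (hl : 0 < ℓ) (z : Euc n)
    (hz : z ∈ cube x ℓ) : dist z x ≤ n * ℓ := by
  have h1 : dist z x ≤ Real.sqrt (∑ _i : Fin n, ℓ ^ 2) := by
    rw [EuclideanSpace.dist_eq]
    apply Real.sqrt_le_sqrt
    apply Finset.sum_le_sum
    intro i _
    have h := hz i
    rw [Real.dist_eq, sq_abs]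
    nlinarith [h.1, h.2]
  refine h1.trans ?_
  rw [Finset.sum_const, Finset.card_univ, Fintype.card_fin, nsmul_eq_mul]
  have hn' : (1:ℝ) ≤ n := by exact_mod_cast hn
  have h2 : (n : ℝ) * ℓ ^ 2 ≤ ((n : ℝ) * ℓ) ^ 2 := by nlinarith
  calc Real.sqrt ((n:ℝ) * ℓ ^ 2) ≤ Real.sqrt (((n:ℝ)*ℓ)^2) := Real.sqrt_le_sqrt h2
    _ = (n:ℝ)*ℓ := Real.sqrt_sq (by positivity)

theorem stmt4 (n : ℕ) (hn : 1 ≤ n) (lam : ℝ) (hlam : 0 < lam) :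
    ∃ C : ℝ, 0 < C ∧
      ∀ (q : ℝ), 0 < q → q ≤ lam →
      ∀ (φ : SchwartzMap (Euc n) ℂ) (f : Euc n → ℂ),
        MeasureTheory.LocallyIntegrable f volume →
        (∀ (x : Euc n) (t : ℝ), 0 < t →
          (∫⁻ y, (‖dilat n (⇑φ) t (x - y)‖₊ : ℝ≥0∞) * (‖f y‖₊ : ℝ≥0∞)) < ⊤) →
        ∀ (t : ℝ), 0 < t → ∀ x : Euc n,
          (‖conv n (⇑φ) f t x‖₊ : ℝ≥0∞) ≤
            ENNReal.ofReal C * ENNReal.ofReal (t ^ (-(n : ℝ) / lam)) *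
              morrey n q lam (ntMax n (⇑φ) f) := by
  refine ⟨(2*n) ^ ((n:ℝ)/lam), by positivity, ?_⟩
  intro q hq hqlam φ f _hf _hint t ht x
  set ℓ : ℝ := t / (2*n) with hℓdef
  have hn' : (0:ℝ) < n := by exact_mod_cast hn
  have hl : 0 < ℓ := by positivity
  set Q : Set (Euc n) := cube x ℓ with hQ
  set v : ℝ≥0∞ := (‖conv n (⇑φ) f t x‖₊ : ℝ≥0∞) with hv
  set V : ℝ≥0∞ := volume Q with hV
  have hVeq : V = ENNReal.ofReal ℓ ^ n := cube_volume x ℓ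
  have hV0 : V ≠ 0 := by
    rw [hVeq]; positivity
  have hVtop : V ≠ ⊤ := by
    rw [hVeq]; exact ENNReal.pow_ne_top ENNReal.ofReal_ne_top
  -- pointwise bound
  have hpt : ∀ z ∈ Q, v ≤ ntMax n (⇑φ) f z := by
    intro z hz
    have hd : dist z x < t := by
      have := cube_dist hn x ℓ hl z hz
      have : dist z x ≤ t / 2 := by
        rw [hℓdef] at this
        calc dist z x ≤ (n:ℝ) * (t/(2*n)) := this
          _ = t/2 := by field_simp
      linarith
    exact le_iSup_of_le t (le_iSup_of_le ht (le_iSup_of_le x (le_iSup_of_le hd le_rfl)))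
  -- integral bound
  have hint : v ^ q * V ≤ ∫⁻ y in Q, (ntMax n (⇑φ) f y) ^ q := by
    calc v ^ q * V = ∫⁻ _ in Q, v ^ q := (setLIntegral_const Q _).symm
      _ ≤ _ := setLIntegral_mono' (cube_measurable x ℓ) fun z hz =>
          ENNReal.rpow_le_rpow (hpt z hz) hq.le
  -- morrey bound
  have hmor : V ^ (1/lam) * v ≤ morrey n q lam (ntMax n (⇑φ) f) := by
    have h1 : V ^ (1/lam) * v ≤
        V ^ (1/lam - 1/q) * (∫⁻ y in Q, (ntMax n (⇑φ) f y) ^ q) ^ (1/q) := by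
      have h2 : (v ^ q * V) ^ (1/q) = v * V ^ (1/q) := by
        rw [ENNReal.mul_rpow_of_nonneg _ _ (by positivity), ← ENNReal.rpow_mul,
          mul_one_div_cancel hq.ne', ENNReal.rpow_one]
      calc V ^ (1/lam) * v = V ^ (1/lam - 1/q) * (v * V ^ (1/q)) := by
            rw [← mul_assoc, mul_comm (V ^ (1/lam - 1/q)) v, mul_assoc,
              ← ENNReal.rpow_add _ _ hV0 hVtop, sub_add_cancel, mul_comm v]
        _ = V ^ (1/lam - 1/q) * (v ^ q * V) ^ (1/q) := by rw [h2]
        _ ≤ _ := by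
            exact mul_le_mul_right (ENNReal.rpow_le_rpow hint (by positivity)) _
    refine h1.trans ?_
    exact le_iSup_of_le x (le_iSup_of_le ℓ (le_iSup_of_le hl le_rfl))
  -- conclude
  have hpow0 : V ^ (1/lam) ≠ 0 := by
    simp [ENNReal.rpow_eq_zero_iff, hV0, hVtop]
  have hpowtop : V ^ (1/lam) ≠ ⊤ := by
    simp [ENNReal.rpow_eq_top_iff, hV0, hVtop]
  have key : v ≤ V ^ (-(1/lam)) * morrey n q lam (ntMax n (⇑φ) f) := by
    have : v = V ^ (-(1/lam)) * (V ^ (1/lam) * v) := by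
      rw [← mul_assoc, ← ENNReal.rpow_add _ _ hV0 hVtop, neg_add_cancel, ENNReal.rpow_zero,
        one_mul]
    rw [this]
    exact mul_le_mul_right hmor _
  refine key.trans (le_of_eq ?_)
  congr 1
  -- V ^ (-(1/lam)) = ofReal ((2n)^(n/lam)) * ofReal (t^(-n/lam))
  rw [hVeq, ← ENNReal.ofReal_pow hl.le, ENNReal.ofReal_rpow_of_pos (by positivity),
    ← ENNReal.ofReal_mul (by positivity)]
  congr 1
  rw [← Real.rpow_natCast ℓ n, ← Real.rpow_mul hl.le]
  rw [hℓdef, Real.div_rpow ht.le (by positivity), div_eq_mul_inv,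
    ← Real.rpow_neg (by positivity)]
  rw [show ((n:ℝ) * -(1/lam)) = -((n:ℝ)/lam) by ring, show (-(n:ℝ)/lam) = -((n:ℝ)/lam) by ring,
    neg_neg]
  ring


end
end

section
/- Let n ≥ 1, 0 < q ≤ 1 and q ≤ λ < ∞. There is a constant C > 0 depending only on n, q, λ such that: for every family of complex scalars {s_Q} indexed by the dyadic cubes and every dyadic cube J, one has |J|^{q/λ − 1} · Σ_{Q dyadic, ℓ_Q ≥ 1} |s_Q|^q · |Q|^{−q/λ} · |J ∩ Q*| ≤ C · ‖{s_Q}‖_{λ,q}^q, where Q* denotes the cube with the same center as Q and twice its sidelength. -/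
open MeasureTheory
open scoped ENNReal NNReal BigOperators

noncomputable section

namespace Stmt17Aux

lemma two_rpow_ne_top (x : ℝ) : (2:ℝ≥0∞) ^ x ≠ ⊤ := by
  simp [ENNReal.rpow_eq_top_iff]

lemma two_rpow_ne_zero (x : ℝ) : (2:ℝ≥0∞) ^ x ≠ 0 := by
  simp [ENNReal.rpow_eq_zero_iff]

lemma two_rpow_add (x y : ℝ) : (2:ℝ≥0∞) ^ (x + y) = 2 ^ x * 2 ^ y :=
  ENNReal.rpow_add x y (by norm_num) (by norm_num)

lemma two_rpow_rpow (x y : ℝ) : ((2:ℝ≥0∞) ^ x) ^ y = 2 ^ (x * y) :=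
  (ENNReal.rpow_mul 2 x y).symm

lemma two_rpow_le (x y : ℝ) (h : x ≤ y) : (2:ℝ≥0∞) ^ x ≤ 2 ^ y :=
  ENNReal.rpow_le_rpow_of_exponent_le (by norm_num) h

lemma vol_pi_set {n : ℕ} (I : Fin n → Set ℝ) (hI : ∀ i, MeasurableSet (I i)) :
    volume {y : Euc n | ∀ i, y i ∈ I i} = ∏ i, volume (I i) := by
  have e := EuclideanSpace.volume_preserving_symm_measurableEquiv_toLp (Fin n)
  have hs : {y : Euc n | ∀ i, y i ∈ I i}
      = (MeasurableEquiv.toLp 2 (Fin n → ℝ)).symm ⁻¹' (Set.univ.pi I) := by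
    ext y
    exact ⟨fun h i _ => h i, fun h i => h i (Set.mem_univ i)⟩
  rw [hs, e.measure_preimage ((MeasurableSet.univ_pi (fun i => hI i)).nullMeasurableSet),
    volume_pi_pi]

lemma ofReal_two_zpow (k : ℤ) : ENNReal.ofReal ((2:ℝ) ^ k) = (2:ℝ≥0∞) ^ (k:ℝ) := by
  rw [← Real.rpow_intCast 2 k, ← ENNReal.ofReal_rpow_of_pos two_pos, ENNReal.ofReal_ofNat]

lemma vol_dyadic {n : ℕ} (D : DyadicCube n) :
    volume D.set = (2:ℝ≥0∞) ^ ((D.k : ℝ) * n) := by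
  have hs : D.set = {y : Euc n | ∀ i, y i ∈
      Set.Ico ((2:ℝ)^D.k * D.m i) ((2:ℝ)^D.k * (D.m i + 1))} := rfl
  rw [hs, vol_pi_set _ (fun i => measurableSet_Ico)]
  have : ∀ i : Fin n, volume (Set.Ico ((2:ℝ)^D.k * D.m i) ((2:ℝ)^D.k * (D.m i + 1)))
      = (2:ℝ≥0∞) ^ (D.k : ℝ) := by
    intro i
    rw [Real.volume_Ico, ← ofReal_two_zpow]
    ring_nf
  rw [Finset.prod_congr rfl (fun i _ => this i), Finset.prod_const, Finset.card_univ,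
    Fintype.card_fin, ← ENNReal.rpow_natCast, two_rpow_rpow]

lemma vol_cube {n : ℕ} (c : Euc n) (ℓ : ℝ) :
    volume (cube c ℓ) = ∏ _i : Fin n, ENNReal.ofReal ℓ := by
  have hs : cube c ℓ = {y : Euc n | ∀ i, y i ∈ Set.Icc (c i) (c i + ℓ)} := rfl
  rw [hs, vol_pi_set _ (fun i => measurableSet_Icc)]
  exact Finset.prod_congr rfl (fun i _ => by rw [Real.volume_Icc]; ring_nf)

lemma vol_double {n : ℕ} (D : DyadicCube n) :
    volume D.double = (2:ℝ≥0∞) ^ ((n:ℝ) + (D.k : ℝ) * n) := by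
  rw [DyadicCube.double, vol_cube, Finset.prod_const, Finset.card_univ, Fintype.card_fin]
  have h1 : ENNReal.ofReal (2 * (2:ℝ)^D.k) = (2:ℝ≥0∞) ^ ((1:ℝ) + D.k) := by
    have : (2:ℝ) * 2 ^ D.k = (2:ℝ) ^ (1 + D.k : ℤ) := by
      rw [zpow_add₀ (by norm_num : (2:ℝ) ≠ 0)]; norm_num
    rw [this, ofReal_two_zpow]; push_cast; ring_nf
  rw [h1, ← ENNReal.rpow_natCast, two_rpow_rpow]
  ring_nf

end Stmt17Aux

namespace Stmt17Aux

lemma rpow_cancel {a : ℝ≥0∞} (h0 : a ≠ 0) (ht : a ≠ ⊤) (u : ℝ) : a ^ u * a ^ (-u) = 1 := by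
  rw [← ENNReal.rpow_add _ _ h0 ht]; simp

lemma vol_dyadic_ne_zero {n : ℕ} (D : DyadicCube n) : volume D.set ≠ 0 := by
  rw [vol_dyadic]; exact two_rpow_ne_zero _

lemma vol_dyadic_ne_top {n : ℕ} (D : DyadicCube n) : volume D.set ≠ ⊤ := by
  rw [vol_dyadic]; exact two_rpow_ne_top _

lemma sNorm_sum_bound {n : ℕ} {q lam : ℝ} (hq : 0 < q) (s : DyadicCube n → ℂ) (J' : DyadicCube n) :
    ∑' Q : {Q : DyadicCube n // Q.set ⊆ J'.set},
        (volume (Q.1).set ^ (1/q - 1/lam) * (‖s Q.1‖₊ : ℝ≥0∞)) ^ q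
      ≤ volume J'.set ^ (1 - q/lam) * sNorm n q lam s ^ q := by
  set T := ∑' Q : {Q : DyadicCube n // Q.set ⊆ J'.set},
      (volume (Q.1).set ^ (1/q - 1/lam) * (‖s Q.1‖₊ : ℝ≥0∞)) ^ q with hT
  have h1 : (volume J'.set ^ (q/lam - 1) * T) ^ (1/q) ≤ sNorm n q lam s := by
    exact le_iSup (fun J => (volume J.set ^ (q/lam - 1) *
      ∑' Q : {Q : DyadicCube n // Q.set ⊆ J.set},
        (volume (Q.1).set ^ (1/q - 1/lam) * (‖s Q.1‖₊ : ℝ≥0∞)) ^ q) ^ (1/q)) J'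
  have h2 : volume J'.set ^ (q/lam - 1) * T ≤ sNorm n q lam s ^ q := by
    have := ENNReal.rpow_le_rpow h1 hq.le
    rwa [← ENNReal.rpow_mul, one_div_mul_cancel hq.ne', ENNReal.rpow_one] at this
  calc T = (volume J'.set ^ (1 - q/lam) * volume J'.set ^ (q/lam - 1)) * T := by
        rw [show q/lam - 1 = -(1 - q/lam) by ring,
          rpow_cancel (vol_dyadic_ne_zero J') (vol_dyadic_ne_top J'), one_mul]
    _ = volume J'.set ^ (1 - q/lam) * (volume J'.set ^ (q/lam - 1) * T) := by ring
    _ ≤ volume J'.set ^ (1 - q/lam) * sNorm n q lam s ^ q := mul_le_mul_right h2 _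

lemma sNorm_term_bound {n : ℕ} {q lam : ℝ} (hq : 0 < q) (hlam : 0 < lam)
    (s : DyadicCube n → ℂ) (Q : DyadicCube n) :
    (‖s Q‖₊ : ℝ≥0∞) ^ q ≤ sNorm n q lam s ^ q := by
  have h1 : (volume Q.set ^ (1/q - 1/lam) * (‖s Q‖₊ : ℝ≥0∞)) ^ q
      ≤ volume Q.set ^ (1 - q/lam) * sNorm n q lam s ^ q :=
    le_trans (ENNReal.le_tsum (⟨Q, subset_rfl⟩ : {Q' : DyadicCube n // Q'.set ⊆ Q.set}))
      (sNorm_sum_bound hq s Q)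
  have h2 : (volume Q.set ^ (1/q - 1/lam) * (‖s Q‖₊ : ℝ≥0∞)) ^ q
      = volume Q.set ^ (1 - q/lam) * (‖s Q‖₊ : ℝ≥0∞) ^ q := by
    rw [ENNReal.mul_rpow_of_nonneg _ _ hq.le, ← ENNReal.rpow_mul]
    congr 2
    field_simp
  rw [h2] at h1
  rwa [ENNReal.mul_le_mul_iff_right (a := volume Q.set ^ (1 - q/lam))
    (by simp [ENNReal.rpow_eq_zero_iff, vol_dyadic_ne_zero Q, vol_dyadic_ne_top Q])
    (by simp [ENNReal.rpow_eq_top_iff, vol_dyadic_ne_zero Q, vol_dyadic_ne_top Q])] at h1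

end Stmt17Aux

namespace Stmt17Aux

lemma hKd_real (a : ℕ) (K : ℤ) (h : (a:ℤ) ≤ K) :
    (2:ℝ)^K = 2^(a:ℤ) * (((2:ℤ) ^ (K - (a:ℤ)).toNat : ℤ) : ℝ) := by
  have h2 : (((2:ℤ) ^ (K - (a:ℤ)).toNat : ℤ) : ℝ) = (2:ℝ) ^ (K - (a:ℤ)) := by
    push_cast
    rw [← zpow_natCast (2:ℝ), Int.toNat_of_nonneg (by omega)]
  rw [h2, ← zpow_add₀ (by norm_num : (2:ℝ) ≠ 0)]
  congr 1
  ring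

lemma dyadic_nested {n : ℕ} (a : ℕ) (m : Fin n → ℤ) (K : ℤ) (h : (a:ℤ) ≤ K) :
    (DyadicCube.mk (a:ℤ) m).set ⊆
      (DyadicCube.mk K (fun i => m i / 2 ^ (K - (a:ℤ)).toNat)).set := by
  intro y hy i
  set d : ℤ := 2 ^ (K - (a:ℤ)).toNat with hd
  have hdpos : (0:ℤ) < d := pow_pos two_pos _
  have h1 : (2:ℝ)^(a:ℤ) * (m i : ℝ) ≤ y i := (hy i).1
  have h2 : y i < (2:ℝ)^(a:ℤ) * ((m i : ℝ) + 1) := (hy i).2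
  have hK : (2:ℝ)^K = 2^(a:ℤ) * (d:ℝ) := hKd_real a K h
  have hta : (0:ℝ) < 2^(a:ℤ) := zpow_pos two_pos _
  have hlow : d * (m i / d) ≤ m i := by
    have := Int.mul_ediv_add_emod (m i) d
    have := Int.emod_nonneg (m i) hdpos.ne'
    omega
  have hup : m i < (m i / d + 1) * d := Int.lt_ediv_add_one_mul_self (m i) hdpos
  constructor
  · calc (2:ℝ)^K * ((m i / d : ℤ) : ℝ) = 2^(a:ℤ) * ((d * (m i / d) : ℤ) : ℝ) := by
          rw [hK]; push_cast; ring
      _ ≤ 2^(a:ℤ) * (m i : ℝ) := by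
          apply mul_le_mul_of_nonneg_left _ hta.le
          exact_mod_cast hlow
      _ ≤ y i := h1
  · calc y i < (2:ℝ)^(a:ℤ) * ((m i : ℝ) + 1) := h2
      _ ≤ 2^(a:ℤ) * (((m i / d + 1) * d : ℤ) : ℝ) := by
          apply mul_le_mul_of_nonneg_left _ hta.le
          exact_mod_cast hup
      _ = (2:ℝ)^K * (((m i / d : ℤ) : ℝ) + 1) := by
          rw [hK]; push_cast; ring

lemma parent_index_range {n : ℕ} (a : ℕ) (K : ℤ) (h : (a:ℤ) < K) (M m : Fin n → ℤ)
    (x : Euc n) (hxJ : x ∈ (DyadicCube.mk K M).set) (hxD : x ∈ (DyadicCube.mk (a:ℤ) m).double)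
    (i : Fin n) :
    M i - 1 ≤ m i / 2 ^ (K - (a:ℤ)).toNat ∧ m i / 2 ^ (K - (a:ℤ)).toNat ≤ M i + 1 := by
  set d : ℤ := 2 ^ (K - (a:ℤ)).toNat with hd
  have hdpos : (0:ℤ) < d := pow_pos two_pos _
  have hd2 : (2:ℤ) ≤ d := by
    rw [hd]
    calc (2:ℤ) = 2 ^ 1 := (pow_one 2).symm
      _ ≤ 2 ^ (K - (a:ℤ)).toNat := pow_le_pow_right₀ (by norm_num) (by omega)
  have hta : (0:ℝ) < 2^(a:ℤ) := zpow_pos two_pos _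
  have hK : (2:ℝ)^K = 2^(a:ℤ) * (d:ℝ) := hKd_real a K h.le
  have hJ1 : (2:ℝ)^K * (M i : ℝ) ≤ x i := (hxJ i).1
  have hJ2 : x i < (2:ℝ)^K * ((M i : ℝ) + 1) := (hxJ i).2
  have hD1 : (2:ℝ)^(a:ℤ) * (m i:ℝ) - (2:ℝ)^(a:ℤ)/2 ≤ x i := (hxD i).1
  have hD2 : x i ≤ (2:ℝ)^(a:ℤ) * (m i:ℝ) - (2:ℝ)^(a:ℤ)/2 + 2*(2:ℝ)^(a:ℤ) := (hxD i).2
  have hd2r : (2:ℝ) ≤ (d:ℝ) := by exact_mod_cast hd2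
  rw [hK] at hJ1 hJ2
  have h15 : (2:ℝ)^(a:ℤ) * 2 ≤ 2^(a:ℤ) * (d:ℝ) := mul_le_mul_of_nonneg_left hd2r hta.le
  have claim1 : d * (M i - 1) ≤ m i := by
    have hr : (2:ℝ)^(a:ℤ) * ((d * (M i - 1) : ℤ) : ℝ) ≤ 2^(a:ℤ) * (m i : ℝ) := by
      push_cast
      nlinarith [hJ1, hD2, hta, hd2r, h15]
    have := le_of_mul_le_mul_left hr hta
    exact_mod_cast this
  have claim2 : m i < d * (M i + 2) := by
    have hr : (2:ℝ)^(a:ℤ) * (m i : ℝ) < 2^(a:ℤ) * ((d * (M i + 2) : ℤ) : ℝ) := by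
      push_cast
      nlinarith [hJ2, hD1, hta, hd2r, h15]
    have := lt_of_mul_lt_mul_left hr hta.le
    exact_mod_cast this
  constructor
  · rw [Int.le_ediv_iff_mul_le hdpos, mul_comm]
    exact claim1
  · have : m i / d < M i + 2 := by
      rw [Int.ediv_lt_iff_lt_mul hdpos, mul_comm]
      exact claim2
    omega

lemma count_index_range {n : ℕ} (a : ℕ) (K : ℤ) (h : K ≤ (a:ℤ)) (M m : Fin n → ℤ)
    (x : Euc n) (hxJ : x ∈ (DyadicCube.mk K M).set) (hxD : x ∈ (DyadicCube.mk (a:ℤ) m).double)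
    (i : Fin n) :
    ⌊(2:ℝ)^K * (M i : ℝ) / 2^(a:ℤ)⌋ - 1 ≤ m i ∧
      m i ≤ ⌊(2:ℝ)^K * (M i : ℝ) / 2^(a:ℤ)⌋ + 2 := by
  have hta : (0:ℝ) < 2^(a:ℤ) := zpow_pos two_pos _
  have hKa : (2:ℝ)^K ≤ 2^(a:ℤ) := zpow_le_zpow_right₀ (by norm_num) h
  set b : ℤ := ⌊(2:ℝ)^K * (M i : ℝ) / 2^(a:ℤ)⌋ with hb
  have hb1 : (b:ℝ) * 2^(a:ℤ) ≤ (2:ℝ)^K * (M i : ℝ) :=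
    (le_div_iff₀ hta).1 (Int.floor_le _)
  have hb2 : (2:ℝ)^K * (M i : ℝ) < ((b:ℝ) + 1) * 2^(a:ℤ) :=
    (div_lt_iff₀ hta).1 (Int.lt_floor_add_one _)
  have hJ1 : (2:ℝ)^K * (M i : ℝ) ≤ x i := (hxJ i).1
  have hJ2 : x i < (2:ℝ)^K * ((M i : ℝ) + 1) := (hxJ i).2
  have hD1 : (2:ℝ)^(a:ℤ) * (m i:ℝ) - (2:ℝ)^(a:ℤ)/2 ≤ x i := (hxD i).1
  have hD2 : x i ≤ (2:ℝ)^(a:ℤ) * (m i:ℝ) - (2:ℝ)^(a:ℤ)/2 + 2*(2:ℝ)^(a:ℤ) := (hxD i).2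
  constructor
  · -- lower bound
    have hr : ((b:ℝ) - 2) * 2^(a:ℤ) < (m i : ℝ) * 2^(a:ℤ) := by nlinarith
    have := lt_of_mul_lt_mul_right hr hta.le
    have : b - 2 < m i := by exact_mod_cast this
    omega
  · -- upper bound
    have hr : (m i : ℝ) * 2^(a:ℤ) < ((b:ℝ) + 3) * 2^(a:ℤ) := by nlinarith
    have := lt_of_mul_lt_mul_right hr hta.le
    have : m i < b + 3 := by exact_mod_cast this
    omega

end Stmt17Aux

namespace Stmt17Aux

lemma summand_eq {n : ℕ} {q lam : ℝ} (hq : 0 < q) (hlam : 0 < lam)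
    (s : DyadicCube n → ℂ) (D : DyadicCube n) :
    volume D.set ^ (1 - q/lam) * (‖s D‖₊ : ℝ≥0∞) ^ q
      = (volume D.set ^ (1/q - 1/lam) * (‖s D‖₊ : ℝ≥0∞)) ^ q := by
  rw [ENNReal.mul_rpow_of_nonneg _ _ hq.le, ← ENNReal.rpow_mul]
  congr 2
  field_simp

end Stmt17Aux

open Stmt17Aux in
theorem stmt17 (n : ℕ) (hn : 1 ≤ n) (q lam : ℝ) (hq : 0 < q) (hq1 : q ≤ 1) (hqlam : q ≤ lam) :
    ∃ C : ℝ, 0 < C ∧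
      ∀ (s : DyadicCube n → ℂ) (J : DyadicCube n),
        volume J.set ^ (q / lam - 1) *
            ∑' Q : {Q : DyadicCube n // 1 ≤ Q.len},
              (‖s Q.1‖₊ : ℝ≥0∞) ^ q * volume (Q.1).set ^ (-(q / lam)) *
                volume (J.set ∩ (Q.1).double) ≤
          ENNReal.ofReal C * sNorm n q lam s ^ q := by
  classical
  have hlam : 0 < lam := lt_of_lt_of_le hq hqlam
  have hnR : (0:ℝ) < n := by exact_mod_cast hn
  set θ : ℝ := (n:ℝ) * q / lam with hθdef
  have hθ : 0 < θ := div_pos (mul_pos hnR hq) hlam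
  set r : ℝ≥0∞ := (2:ℝ≥0∞) ^ (-θ) with hr
  have hrlt1 : r < 1 := by
    rw [hr, ENNReal.rpow_neg, ENNReal.inv_lt_one]
    calc (1:ℝ≥0∞) = 2 ^ (0:ℝ) := by simp
      _ < 2 ^ θ := ENNReal.rpow_lt_rpow_of_exponent_lt (by norm_num) (by norm_num) hθ
  have hgeom_ne_top : (1 - r)⁻¹ ≠ ⊤ := by
    rw [ENNReal.inv_ne_top]; simp [tsub_eq_zero_iff_le, hrlt1.not_ge]
  set Ce : ℝ≥0∞ := (4:ℝ≥0∞)^n * (1-r)⁻¹ + (3:ℝ≥0∞)^n * (2:ℝ≥0∞)^((n:ℝ)) with hCe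
  have hCetop : Ce ≠ ⊤ := by
    rw [hCe]
    refine ENNReal.add_ne_top.2 ⟨ENNReal.mul_ne_top ?_ hgeom_ne_top,
      ENNReal.mul_ne_top ?_ (two_rpow_ne_top _)⟩
    · exact ENNReal.pow_ne_top (by norm_num)
    · exact ENNReal.pow_ne_top (by norm_num)
  refine ⟨Ce.toReal + 1, by positivity, ?_⟩
  intro s J
  set N : ℝ≥0∞ := sNorm n q lam s ^ q with hN
  have hCele : Ce ≤ ENNReal.ofReal (Ce.toReal + 1) := by
    calc Ce = ENNReal.ofReal Ce.toReal := (ENNReal.ofReal_toReal hCetop).symm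
      _ ≤ ENNReal.ofReal (Ce.toReal + 1) := ENNReal.ofReal_le_ofReal (by linarith)
  suffices h : volume J.set ^ (q / lam - 1) *
      ∑' Q : {Q : DyadicCube n // 1 ≤ Q.len},
        (‖s Q.1‖₊ : ℝ≥0∞) ^ q * volume (Q.1).set ^ (-(q / lam)) *
          volume (J.set ∩ (Q.1).double) ≤ Ce * N by
    exact h.trans (mul_le_mul_left hCele _)
  -- the term as a function of the dyadic cube
  set F : DyadicCube n → ℝ≥0∞ := fun D =>
    (‖s D‖₊ : ℝ≥0∞) ^ q * volume D.set ^ (-(q / lam)) * volume (J.set ∩ D.double) with hF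
  -- Step 1 : compare to the sum over all pairs (a, m)
  have step1 : ∑' Q : {Q : DyadicCube n // 1 ≤ Q.len}, F Q.1 ≤
      ∑' p : ℕ × (Fin n → ℤ), F (DyadicCube.mk (p.1 : ℤ) p.2) := by
    have hk0 : ∀ Q : {Q : DyadicCube n // 1 ≤ Q.len}, 0 ≤ Q.1.k := by
      intro Q
      by_contra hneg
      push_neg at hneg
      have h1 : (2:ℝ) ^ Q.1.k ≤ 2 ^ (-1 : ℤ) :=
        zpow_le_zpow_right₀ (by norm_num) (by omega)
      have h2 : (1:ℝ) ≤ (2:ℝ) ^ Q.1.k := Q.2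
      rw [zpow_neg_one] at h1
      norm_num at h1
      linarith
    set g : {Q : DyadicCube n // 1 ≤ Q.len} → ℕ × (Fin n → ℤ) :=
      fun Q => (Q.1.k.toNat, Q.1.m) with hg
    have hDg : ∀ Q : {Q : DyadicCube n // 1 ≤ Q.len},
        DyadicCube.mk (((g Q).1 : ℕ) : ℤ) (g Q).2 = Q.1 := by
      intro Q
      simp only [hg]
      rw [Int.toNat_of_nonneg (hk0 Q)]
    have hginj : Function.Injective g := by
      intro Q Q' hQQ
      have h := hDg Q
      rw [hQQ, hDg Q'] at h
      exact Subtype.ext h.symm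
    refine le_trans (le_of_eq (tsum_congr fun Q => ?_))
      (ENNReal.tsum_comp_le_tsum_of_injective hginj (fun p => F (DyadicCube.mk (p.1 : ℤ) p.2)))
    exact (congrArg F (hDg Q)).symm
  -- split into large and small scales
  set tA : ℕ → (Fin n → ℤ) → ℝ≥0∞ := fun a m =>
    if J.k ≤ (a:ℤ) then F (DyadicCube.mk (a:ℤ) m) else 0 with htA
  set tB : ℕ → (Fin n → ℤ) → ℝ≥0∞ := fun a m =>
    if (a:ℤ) < J.k then F (DyadicCube.mk (a:ℤ) m) else 0 with htB
  have hvolJ : volume J.set = (2:ℝ≥0∞) ^ ((J.k:ℝ) * n) := vol_dyadic J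
  have hdecomp : ∑' p : ℕ × (Fin n → ℤ), F (DyadicCube.mk (p.1 : ℤ) p.2)
      = (∑' a : ℕ, ∑' m : Fin n → ℤ, tA a m) + (∑' a : ℕ, ∑' m : Fin n → ℤ, tB a m) := by
    calc ∑' p : ℕ × (Fin n → ℤ), F (DyadicCube.mk (p.1 : ℤ) p.2)
        = ∑' (a : ℕ) (m : Fin n → ℤ), F (DyadicCube.mk (a : ℤ) m) :=
          ENNReal.tsum_prod (f := fun (a : ℕ) (m : Fin n → ℤ) => F (DyadicCube.mk (a : ℤ) m))
      _ = ∑' (a : ℕ) (m : Fin n → ℤ), (tA a m + tB a m) := by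
          refine tsum_congr fun a => tsum_congr fun m => ?_
          simp only [htA, htB]
          by_cases hc : J.k ≤ (a:ℤ)
          · rw [if_pos hc, if_neg (not_lt.2 hc), add_zero]
          · rw [if_neg hc, if_pos (not_le.1 hc), zero_add]
      _ = _ := by
          rw [tsum_congr (fun a : ℕ =>
            ENNReal.tsum_add (f := fun m => tA a m) (g := fun m => tB a m))]
          exact ENNReal.tsum_add
  -- Part A : large cubes
  have partA : volume J.set ^ (q/lam - 1) * ∑' (a : ℕ) (m : Fin n → ℤ), tA a m
      ≤ (4:ℝ≥0∞)^n * (1-r)⁻¹ * N := by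
    set a₀ : ℕ := J.k.toNat with ha₀
    have hlevel : ∀ a : ℕ, ∑' m : Fin n → ℤ, tA a m
        ≤ if J.k ≤ (a:ℤ) then
            (4:ℝ≥0∞)^n * (N * (2:ℝ≥0∞)^(-((a:ℝ)*θ)) * volume J.set) else 0 := by
      intro a
      by_cases hc : J.k ≤ (a:ℤ)
      · rw [if_pos hc]
        set bb : Fin n → ℤ := fun i => ⌊(2:ℝ)^J.k * (J.m i : ℝ) / 2^(a:ℤ)⌋ with hbb
        set Fa : Finset (Fin n → ℤ) :=
          Fintype.piFinset (fun i => Finset.Icc (bb i - 1) (bb i + 2)) with hFa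
        have key : ∀ m : Fin n → ℤ, m ∉ Fa →
            volume (J.set ∩ (DyadicCube.mk (a:ℤ) m).double) = 0 := by
          intro m hm
          by_contra hv
          obtain ⟨x, hx⟩ := nonempty_of_measure_ne_zero hv
          apply hm
          rw [hFa, Fintype.mem_piFinset]
          intro i
          rw [Finset.mem_Icc]
          exact count_index_range a J.k hc J.m m x hx.1 hx.2 i
        have hsupp : ∀ m ∉ Fa, tA a m = 0 := by
          intro m hm
          simp only [htA]
          rw [if_pos hc]
          simp only [hF]
          rw [key m hm, mul_zero]
        have hB : ∀ m : Fin n → ℤ, tA a m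
            ≤ N * (2:ℝ≥0∞)^(-((a:ℝ)*θ)) * volume J.set := by
          intro m
          simp only [htA]
          rw [if_pos hc]
          simp only [hF]
          refine mul_le_mul' (mul_le_mul' (sNorm_term_bound hq hlam s _) (le_of_eq ?_))
            (measure_mono Set.inter_subset_left)
          rw [vol_dyadic, two_rpow_rpow]
          congr 1
          push_cast [hθdef]
          ring
        calc ∑' m : Fin n → ℤ, tA a m = ∑ m ∈ Fa, tA a m := tsum_eq_sum hsupp
          _ ≤ Fa.card • (N * (2:ℝ≥0∞)^(-((a:ℝ)*θ)) * volume J.set) :=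
              Finset.sum_le_card_nsmul _ _ _ (fun m _ => hB m)
          _ = (4:ℝ≥0∞)^n * (N * (2:ℝ≥0∞)^(-((a:ℝ)*θ)) * volume J.set) := by
              rw [hFa, Fintype.card_piFinset]
              have hcard : ∀ i : Fin n, (Finset.Icc (bb i - 1) (bb i + 2)).card = 4 :=
                fun i => by rw [Int.card_Icc]; omega
              rw [Finset.prod_congr rfl (fun i _ => hcard i), Finset.prod_const,
                Finset.card_univ, Fintype.card_fin, nsmul_eq_mul]
              push_cast
              ring
      · rw [if_neg hc]
        refine le_of_eq ?_
        have : ∀ m : Fin n → ℤ, tA a m = 0 := by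
          intro m; simp only [htA]; rw [if_neg hc]
        rw [tsum_congr this, tsum_zero]
    have hpow : ∀ a : ℕ, J.k ≤ (a:ℤ) →
        volume J.set ^ (q/lam - 1) * volume J.set * (2:ℝ≥0∞)^(-((a:ℝ)*θ))
          ≤ r ^ (a - a₀) := by
      intro a hc
      have ha' : a₀ ≤ a := Int.toNat_le.2 hc
      have hJka₀ : (J.k:ℝ) ≤ (a₀:ℝ) := by exact_mod_cast Int.self_le_toNat J.k
      rw [hvolJ, two_rpow_rpow, ← two_rpow_add, ← two_rpow_add, hr,
        ← ENNReal.rpow_natCast ((2:ℝ≥0∞) ^ (-θ)) (a - a₀), two_rpow_rpow]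
      apply two_rpow_le
      rw [Nat.cast_sub ha']
      have h1 : (0:ℝ) ≤ ((a₀:ℝ) - (J.k:ℝ)) * θ :=
        mul_nonneg (by linarith) hθ.le
      have h2 : (J.k:ℝ) * ↑n * (q / lam - 1) + (J.k:ℝ) * ↑n = (J.k:ℝ) * θ := by
        rw [hθdef]; ring
      nlinarith [h1, h2]
    have hgeo : ∑' a : ℕ, (if J.k ≤ (a:ℤ) then r ^ (a - a₀) else 0) ≤ (1 - r)⁻¹ := by
      have hsupp2 : Function.support (fun a : ℕ => if J.k ≤ (a:ℤ) then r ^ (a - a₀) else 0)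
          ⊆ Set.range (fun j : ℕ => a₀ + j) := by
        intro a ha
        simp only [Function.mem_support] at ha
        by_cases hc : J.k ≤ (a:ℤ)
        · have ha' : a₀ ≤ a := Int.toNat_le.2 hc
          refine ⟨a - a₀, ?_⟩
          show a₀ + (a - a₀) = a
          omega
        · rw [if_neg hc] at ha; exact absurd rfl ha
      calc ∑' a : ℕ, (if J.k ≤ (a:ℤ) then r ^ (a - a₀) else 0)
          = ∑' j : ℕ, (if J.k ≤ ((a₀ + j : ℕ):ℤ) then r ^ (a₀ + j - a₀) else 0) :=
            (Function.Injective.tsum_eq (add_right_injective a₀) hsupp2).symm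
        _ ≤ ∑' j : ℕ, r ^ j := by
            refine ENNReal.tsum_le_tsum fun j => ?_
            by_cases hc : J.k ≤ ((a₀ + j : ℕ):ℤ)
            · rw [if_pos hc, Nat.add_sub_cancel_left]
            · rw [if_neg hc]; exact zero_le
        _ = (1 - r)⁻¹ := ENNReal.tsum_geometric r
    calc volume J.set ^ (q/lam - 1) * ∑' (a : ℕ) (m : Fin n → ℤ), tA a m
        = ∑' a : ℕ, volume J.set ^ (q/lam - 1) * ∑' m : Fin n → ℤ, tA a m := by
          rw [ENNReal.tsum_mul_left]
      _ ≤ ∑' a : ℕ, ((4:ℝ≥0∞)^n * N) * (if J.k ≤ (a:ℤ) then r ^ (a - a₀) else 0) := by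
          refine ENNReal.tsum_le_tsum fun a => ?_
          refine le_trans (mul_le_mul_right (hlevel a) _) ?_
          by_cases hc : J.k ≤ (a:ℤ)
          · rw [if_pos hc, if_pos hc]
            calc volume J.set ^ (q/lam - 1) *
                  ((4:ℝ≥0∞)^n * (N * (2:ℝ≥0∞)^(-((a:ℝ)*θ)) * volume J.set))
                = ((4:ℝ≥0∞)^n * N) *
                    (volume J.set ^ (q/lam - 1) * volume J.set * (2:ℝ≥0∞)^(-((a:ℝ)*θ))) := by
                  ring
              _ ≤ ((4:ℝ≥0∞)^n * N) * r ^ (a - a₀) := mul_le_mul_right (hpow a hc) _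
          · rw [if_neg hc, if_neg hc, mul_zero, mul_zero]
      _ = ((4:ℝ≥0∞)^n * N) * ∑' a : ℕ, (if J.k ≤ (a:ℤ) then r ^ (a - a₀) else 0) :=
          ENNReal.tsum_mul_left
      _ ≤ ((4:ℝ≥0∞)^n * N) * (1 - r)⁻¹ := mul_le_mul_right hgeo _
      _ = (4:ℝ≥0∞)^n * (1-r)⁻¹ * N := by ring
  -- Part B : small cubes
  have partB : volume J.set ^ (q/lam - 1) * ∑' (a : ℕ) (m : Fin n → ℤ), tB a m
      ≤ (3:ℝ≥0∞)^n * (2:ℝ≥0∞)^((n:ℝ)) * N := by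
    set E : Finset (Fin n → ℤ) :=
      Fintype.piFinset (fun i => Finset.Icc (J.m i - 1) (J.m i + 1)) with hE
    set par : ℕ → (Fin n → ℤ) → (Fin n → ℤ) :=
      fun a m i => m i / 2 ^ (J.k - (a:ℤ)).toNat with hpar
    set w : (Fin n → ℤ) → ℕ → (Fin n → ℤ) → ℝ≥0∞ := fun e a m =>
      if ((a:ℤ) < J.k ∧ par a m = e) then
        (2:ℝ≥0∞)^((n:ℝ)) * (volume (DyadicCube.mk (a:ℤ) m).set ^ (1 - q/lam) *
          (‖s (DyadicCube.mk (a:ℤ) m)‖₊ : ℝ≥0∞) ^ q)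
      else 0 with hw
    have hpoint : ∀ a m, tB a m ≤ ∑ e ∈ E, w e a m := by
      intro a m
      by_cases hc : (a:ℤ) < J.k
      · by_cases hv : volume (J.set ∩ (DyadicCube.mk (a:ℤ) m).double) = 0
        · have h0 : tB a m = 0 := by
            simp only [htB]
            rw [if_pos hc]
            simp only [hF]
            rw [hv, mul_zero]
          rw [h0]; exact zero_le
        · obtain ⟨x, hx⟩ := nonempty_of_measure_ne_zero hv
          have hmem : par a m ∈ E := by
            rw [hE, Fintype.mem_piFinset]
            intro i
            rw [Finset.mem_Icc]
            exact parent_index_range a J.k hc J.m m x hx.1 hx.2 i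
          have hle : tB a m ≤ w (par a m) a m := by
            have h1 : tB a m = F (DyadicCube.mk (a:ℤ) m) := if_pos hc
            have h2 : w (par a m) a m
                = (2:ℝ≥0∞)^((n:ℝ)) * (volume (DyadicCube.mk (a:ℤ) m).set ^ (1 - q/lam) *
                  (‖s (DyadicCube.mk (a:ℤ) m)‖₊ : ℝ≥0∞) ^ q) := if_pos ⟨hc, rfl⟩
            rw [h1, h2]
            simp only [hF]
            refine le_trans
              (mul_le_mul_right (measure_mono Set.inter_subset_right) _)
              (le_of_eq ?_)
            rw [vol_dyadic, vol_double, two_rpow_rpow]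
            set X : ℝ≥0∞ := (‖s (DyadicCube.mk (a:ℤ) m)‖₊ : ℝ≥0∞) ^ q with hX
            set e1 : ℝ := (((a:ℤ):ℝ) * ↑n) * (-(q/lam)) with he1
            set e2 : ℝ := (n:ℝ) + ((a:ℤ):ℝ) * ↑n with he2
            set e3 : ℝ := (((a:ℤ):ℝ) * ↑n) * (1 - q/lam) with he3
            have h12 : (2:ℝ≥0∞)^e1 * (2:ℝ≥0∞)^e2 = (2:ℝ≥0∞)^((n:ℝ)) * (2:ℝ≥0∞)^e3 := by
              rw [← two_rpow_add e1 e2, ← two_rpow_add (n:ℝ) e3]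
              congr 1
              rw [he1, he2, he3]
              ring
            calc X * (2:ℝ≥0∞)^e1 * (2:ℝ≥0∞)^e2 = ((2:ℝ≥0∞)^e1 * (2:ℝ≥0∞)^e2) * X := by
                  ring
              _ = ((2:ℝ≥0∞)^((n:ℝ)) * (2:ℝ≥0∞)^e3) * X := by rw [h12]
              _ = (2:ℝ≥0∞)^((n:ℝ)) * ((2:ℝ≥0∞)^e3 * X) := by ring
              _ = (2:ℝ≥0∞)^((n:ℝ)) *
                    (((2:ℝ≥0∞) ^ (((a:ℤ):ℝ) * ↑n)) ^ (1 - q/lam) * X) := by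
                  rw [he3, two_rpow_rpow]
          exact hle.trans
            (Finset.single_le_sum (f := fun e => w e a m) (fun e _ => zero_le) hmem)
      · have h0 : tB a m = 0 := by simp only [htB]; rw [if_neg hc]
        rw [h0]; exact zero_le
    have hone : ∀ e ∈ E, ∑' (a : ℕ) (m : Fin n → ℤ), w e a m
        ≤ (2:ℝ≥0∞)^((n:ℝ)) * (volume J.set ^ (1 - q/lam) * N) := by
      intro e _
      set Je : DyadicCube n := DyadicCube.mk J.k e with hJe
      set W : {Q : DyadicCube n // Q.set ⊆ Je.set} → ℝ≥0∞ := fun Q' =>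
        (2:ℝ≥0∞)^((n:ℝ)) * (volume (Q'.1).set ^ (1 - q/lam) * (‖s Q'.1‖₊ : ℝ≥0∞) ^ q) with hW
      set v : ℕ × (Fin n → ℤ) → ℝ≥0∞ := fun p => w e p.1 p.2 with hv
      have hcondof : ∀ p : ℕ × (Fin n → ℤ), v p ≠ 0 →
          ((p.1:ℤ) < J.k ∧ par p.1 p.2 = e) := by
        intro p hp
        by_contra hcc
        refine hp ?_
        simp only [hv, hw]
        rw [if_neg hcc]
      have hsub : ∀ p : ℕ × (Fin n → ℤ), v p ≠ 0 →
          (DyadicCube.mk (p.1:ℤ) p.2).set ⊆ Je.set := by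
        intro p hp
        obtain ⟨hlt, hpe⟩ := hcondof p hp
        have hnest := dyadic_nested p.1 p.2 J.k hlt.le
        rw [hJe, ← hpe]
        exact hnest
      have hres : ∑' p : ℕ × (Fin n → ℤ), v p = ∑' u : Function.support v, v u.1 :=
        (tsum_subtype_eq_of_support_subset subset_rfl).symm
      set φ : Function.support v → {Q : DyadicCube n // Q.set ⊆ Je.set} :=
        fun u => ⟨DyadicCube.mk (u.1.1:ℤ) u.1.2, hsub u.1 u.2⟩ with hφ
      have hφinj : Function.Injective φ := by
        intro u u' huu
        have h1 : DyadicCube.mk (u.1.1:ℤ) u.1.2 = DyadicCube.mk (u'.1.1:ℤ) u'.1.2 :=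
          congrArg Subtype.val huu
        have hk : ((u.1.1:ℕ):ℤ) = ((u'.1.1:ℕ):ℤ) := congrArg DyadicCube.k h1
        have hm : u.1.2 = u'.1.2 := congrArg DyadicCube.m h1
        have hk' : u.1.1 = u'.1.1 := by exact_mod_cast hk
        exact Subtype.ext (Prod.ext hk' hm)
      have hval : ∀ u : Function.support v, v u.1 = W (φ u) := by
        intro u
        obtain ⟨hlt, hpe⟩ := hcondof u.1 u.2
        simp only [hv, hw, hW, hφ]
        rw [if_pos ⟨hlt, hpe⟩]
      calc ∑' (a : ℕ) (m : Fin n → ℤ), w e a m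
          = ∑' p : ℕ × (Fin n → ℤ), v p := ENNReal.tsum_prod.symm
        _ = ∑' u : Function.support v, W (φ u) := by rw [hres]; exact tsum_congr hval
        _ ≤ ∑' Q' : {Q : DyadicCube n // Q.set ⊆ Je.set}, W Q' :=
            ENNReal.tsum_comp_le_tsum_of_injective hφinj W
        _ = (2:ℝ≥0∞)^((n:ℝ)) * ∑' Q' : {Q : DyadicCube n // Q.set ⊆ Je.set},
              (volume (Q'.1).set ^ (1 - q/lam) * (‖s Q'.1‖₊ : ℝ≥0∞) ^ q) := by
            simp only [hW]
            exact ENNReal.tsum_mul_left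
        _ = (2:ℝ≥0∞)^((n:ℝ)) * ∑' Q' : {Q : DyadicCube n // Q.set ⊆ Je.set},
              (volume (Q'.1).set ^ (1/q - 1/lam) * (‖s Q'.1‖₊ : ℝ≥0∞)) ^ q := by
            congr 1
            exact tsum_congr (fun Q' => summand_eq hq hlam s Q'.1)
        _ ≤ (2:ℝ≥0∞)^((n:ℝ)) * (volume Je.set ^ (1 - q/lam) * sNorm n q lam s ^ q) :=
            mul_le_mul_right (sNorm_sum_bound hq s Je) _
        _ = (2:ℝ≥0∞)^((n:ℝ)) * (volume J.set ^ (1 - q/lam) * N) := by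
            have hveq : volume Je.set = volume J.set := by
              rw [vol_dyadic Je, vol_dyadic J]
            rw [hveq, hN]
    have hsumB : ∑' (a : ℕ) (m : Fin n → ℤ), tB a m
        ≤ (3:ℝ≥0∞)^n * ((2:ℝ≥0∞)^((n:ℝ)) * (volume J.set ^ (1 - q/lam) * N)) := by
      calc ∑' (a : ℕ) (m : Fin n → ℤ), tB a m
          ≤ ∑' (a : ℕ) (m : Fin n → ℤ), ∑ e ∈ E, w e a m :=
            ENNReal.tsum_le_tsum fun a => ENNReal.tsum_le_tsum fun m => hpoint a m
        _ = ∑ e ∈ E, ∑' (a : ℕ) (m : Fin n → ℤ), w e a m := by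
            rw [tsum_congr (fun a : ℕ => Summable.tsum_finsetSum (f := fun e m => w e a m)
              (fun e _ => ENNReal.summable))]
            exact Summable.tsum_finsetSum (fun e _ => ENNReal.summable)
        _ ≤ E.card • ((2:ℝ≥0∞)^((n:ℝ)) * (volume J.set ^ (1 - q/lam) * N)) :=
            Finset.sum_le_card_nsmul _ _ _ hone
        _ = (3:ℝ≥0∞)^n * ((2:ℝ≥0∞)^((n:ℝ)) * (volume J.set ^ (1 - q/lam) * N)) := by
            rw [hE, Fintype.card_piFinset]
            have hcard : ∀ i : Fin n, (Finset.Icc (J.m i - 1) (J.m i + 1)).card = 3 :=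
              fun i => by rw [Int.card_Icc]; omega
            rw [Finset.prod_congr rfl (fun i _ => hcard i), Finset.prod_const,
              Finset.card_univ, Fintype.card_fin, nsmul_eq_mul]
            push_cast
            ring
    calc volume J.set ^ (q/lam - 1) * ∑' (a : ℕ) (m : Fin n → ℤ), tB a m
        ≤ volume J.set ^ (q/lam - 1) *
            ((3:ℝ≥0∞)^n * ((2:ℝ≥0∞)^((n:ℝ)) * (volume J.set ^ (1 - q/lam) * N))) :=
          mul_le_mul_right hsumB _
      _ = ((3:ℝ≥0∞)^n * (2:ℝ≥0∞)^((n:ℝ)) * N) *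
            (volume J.set ^ (1 - q/lam) * volume J.set ^ (q/lam - 1)) := by ring
      _ = (3:ℝ≥0∞)^n * (2:ℝ≥0∞)^((n:ℝ)) * N := by
          rw [show q/lam - 1 = -(1 - q/lam) by ring,
            rpow_cancel (vol_dyadic_ne_zero J) (vol_dyadic_ne_top J), mul_one]
  -- combine
  have hgoalF : ∑' Q : {Q : DyadicCube n // 1 ≤ Q.len},
      (‖s Q.1‖₊ : ℝ≥0∞) ^ q * volume (Q.1).set ^ (-(q / lam)) *
        volume (J.set ∩ (Q.1).double) = ∑' Q : {Q : DyadicCube n // 1 ≤ Q.len}, F Q.1 :=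
    tsum_congr (fun Q => by simp only [hF])
  rw [hgoalF]
  calc volume J.set ^ (q/lam - 1) * ∑' Q : {Q : DyadicCube n // 1 ≤ Q.len}, F Q.1
      ≤ volume J.set ^ (q/lam - 1) * ∑' p : ℕ × (Fin n → ℤ), F (DyadicCube.mk (p.1 : ℤ) p.2) :=
        mul_le_mul_right step1 _
    _ = volume J.set ^ (q/lam - 1) * (∑' (a : ℕ) (m : Fin n → ℤ), tA a m)
        + volume J.set ^ (q/lam - 1) * (∑' (a : ℕ) (m : Fin n → ℤ), tB a m) := by
        rw [hdecomp, mul_add]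
    _ ≤ (4:ℝ≥0∞)^n * (1-r)⁻¹ * N + (3:ℝ≥0∞)^n * (2:ℝ≥0∞)^((n:ℝ)) * N :=
        add_le_add partA partB
    _ = Ce * N := by rw [hCe]; ring


end
end
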